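/- arXiv:2006.02182 — 3 statements merged into one kernel-verified Lean document; each statement's English description precedes it below -/
import Mathlib

section
/- Let Λ be a ring and let C be a class consisting of finitely presented Λ-modules. If {M_α}_{α≤σ} is a strict C-filtration of a finitely generated Λ-module M (i.e. a continuous chain with M_0 = 0, M_σ = M, M_α ⊊ M_{α+1} for every α < σ, and each factor M_{α+1}/M_α isomorphic to a member of C), then the ordinal σ is finite. -/
open CategoryTheory Function

universe u

namespace GorensteinFDC

variable (Λ : Type u) [Ring Λ]

/-- The data `0 → A → M → B → 0` is a short exact sequence of `Λ`-modules. -/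
def IsSES {A M B : ModuleCat.{u} Λ} (i : A ⟶ M) (p : M ⟶ B) : Prop :=
  Function.Injective i ∧ Function.Surjective p ∧ Function.Exact i p

/-- `Ext¹_Λ(A, B) = 0`, phrased as: every short exact sequence `0 → B → E → A → 0` splits. -/
def Ext1Zero (A B : ModuleCat.{u} Λ) : Prop :=
  ∀ (E : ModuleCat.{u} Λ) (i : B ⟶ E) (p : E ⟶ A),
    IsSES Λ i p → ∃ s : A ⟶ E, s ≫ p = 𝟙 A

/-- The right `Ext¹`-orthogonal class `C^⊥`. -/
def rightPerp (C : Set (ModuleCat.{u} Λ)) : Set (ModuleCat.{u} Λ) :=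
  {X | ∀ A ∈ C, Ext1Zero Λ A X}

/-- The left `Ext¹`-orthogonal class `^⊥C`. -/
def leftPerp (C : Set (ModuleCat.{u} Λ)) : Set (ModuleCat.{u} Λ) :=
  {X | ∀ B ∈ C, Ext1Zero Λ X B}

/-- `(L, R)` is a cotorsion pair. -/
def IsCotorsionPair (L R : Set (ModuleCat.{u} Λ)) : Prop :=
  L = leftPerp Λ R ∧ R = rightPerp Λ L

/-- `K` is a (first) syzygy of `A`: there is a short exact sequence `0 → K → P → A → 0`
with `P` projective. -/
def IsSyzygyOf (K A : ModuleCat.{u} Λ) : Prop :=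
  ∃ (P : ModuleCat.{u} Λ) (i : K ⟶ P) (p : P ⟶ A), Projective P ∧ IsSES Λ i p

/-- `K` is an `n`-th syzygy of `A` (the `0`-th syzygy being `A` itself, up to isomorphism). -/
def IsNthSyzygyOf : ℕ → ModuleCat.{u} Λ → ModuleCat.{u} Λ → Prop
  | 0, K, A => Nonempty (K ≅ A)
  | n + 1, K, A => ∃ L, IsNthSyzygyOf n L A ∧ IsSyzygyOf Λ K L

/-- `Ext^i_Λ(A, B) = 0` for all `i ≥ 1`, phrased via vanishing of `Ext¹` on all syzygies
(using `Ext^{n+1}(A, B) ≅ Ext¹(Ωⁿ A, B)`). -/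
def ExtGe1Zero (A B : ModuleCat.{u} Λ) : Prop :=
  ∀ (n : ℕ) (K : ModuleCat.{u} Λ), IsNthSyzygyOf Λ n K A → Ext1Zero Λ K B

/-- The class `M^{⊥∞}` of modules `X` with `Ext^i(M, X) = 0` for all `i ≥ 1`. -/
def perpInfOf (M : ModuleCat.{u} Λ) : Set (ModuleCat.{u} Λ) :=
  {X | ExtGe1Zero Λ M X}

/-- `M` is Gorenstein projective: it is (isomorphic to) a kernel in an exact complex of
projectives which stays exact under `Hom_Λ(-, Q)` for every projective `Q`. -/
def IsGorensteinProjective (M : ModuleCat.{u} Λ) : Prop :=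
  ∃ (P : ℤ → ModuleCat.{u} Λ) (d : ∀ i : ℤ, P (i + 1) ⟶ P i),
    (∀ i, Projective (P i)) ∧
    (∀ i, Function.Exact (d (i + 1)) (d i)) ∧
    (∀ (Q : ModuleCat.{u} Λ), Projective Q →
      ∀ (i : ℤ) (g : P (i + 1) ⟶ Q), d (i + 1) ≫ g = 0 → ∃ h : P i ⟶ Q, d i ≫ h = g) ∧
    Nonempty (M ≃ₗ[Λ] LinearMap.ker (d (-1)).hom)

/-- `M` is strongly Gorenstein projective: as above, but with all terms and all
differentials of the complete resolution equal. -/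
def IsStronglyGorensteinProjective (M : ModuleCat.{u} Λ) : Prop :=
  ∃ (P : ModuleCat.{u} Λ) (f : P ⟶ P),
    Projective P ∧ Function.Exact f f ∧
    (∀ (Q : ModuleCat.{u} Λ), Projective Q →
      ∀ g : P ⟶ Q, f ≫ g = 0 → ∃ h : P ⟶ Q, f ≫ h = g) ∧
    Nonempty (M ≃ₗ[Λ] LinearMap.ker f.hom)

/-- Resolution dimension of `M` with respect to a class `C` is at most `n`. -/
def ResolDimLe (C : Set (ModuleCat.{u} Λ)) : ℕ → ModuleCat.{u} Λ → Prop
  | 0, M => M ∈ C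
  | n + 1, M => ∃ (K G : ModuleCat.{u} Λ) (i : K ⟶ G) (p : G ⟶ M),
      G ∈ C ∧ IsSES Λ i p ∧ ResolDimLe C n K

/-- Coresolution dimension of `M` with respect to a class `C` is at most `n`. -/
def CoresolDimLe (C : Set (ModuleCat.{u} Λ)) : ℕ → ModuleCat.{u} Λ → Prop
  | 0, M => M ∈ C
  | n + 1, M => ∃ (T₀ K : ModuleCat.{u} Λ) (i : M ⟶ T₀) (p : T₀ ⟶ K),
      T₀ ∈ C ∧ IsSES Λ i p ∧ CoresolDimLe C n K

/-- `pd_Λ(M) ≤ n`. -/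
def ProjDimLe (n : ℕ) (M : ModuleCat.{u} Λ) : Prop :=
  ResolDimLe Λ {P | Projective P} n M

/-- `Gpd_Λ(M) ≤ n`. -/
def GProjDimLe (n : ℕ) (M : ModuleCat.{u} Λ) : Prop :=
  ResolDimLe Λ {G | IsGorensteinProjective Λ G} n M

/-- The projective dimension of `M`, as an extended natural number. -/
noncomputable def projDim (M : ModuleCat.{u} Λ) : ℕ∞ :=
  sInf {d : ℕ∞ | ∃ n : ℕ, d = n ∧ ProjDimLe Λ n M}

/-- The Gorenstein projective dimension of `M`, as an extended natural number. -/
noncomputable def gProjDim (M : ModuleCat.{u} Λ) : ℕ∞ :=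
  sInf {d : ℕ∞ | ∃ n : ℕ, d = n ∧ GProjDimLe Λ n M}

/-- The little finitistic dimension `fpd(Λ)`. -/
noncomputable def fpd : ℕ∞ :=
  sSup {d : ℕ∞ | ∃ M : ModuleCat.{u} Λ, Module.Finite Λ M ∧ projDim Λ M = d ∧ d ≠ ⊤}

/-- The big finitistic dimension `FPD(Λ)`. -/
noncomputable def FPD : ℕ∞ :=
  sSup {d : ℕ∞ | ∃ M : ModuleCat.{u} Λ, projDim Λ M = d ∧ d ≠ ⊤}

/-- `M` is strongly finitely presented (i.e. `M ∈ mod(Λ)`): it admits a projective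
resolution by finitely generated projective modules. -/
def StronglyFinitelyPresented (M : ModuleCat.{u} Λ) : Prop :=
  ∃ (P : ℕ → ModuleCat.{u} Λ) (d : ∀ n : ℕ, P (n + 1) ⟶ P n) (ε : P 0 ⟶ M),
    (∀ n, Projective (P n) ∧ Module.Finite Λ (P n)) ∧
    Function.Surjective ε ∧ Function.Exact (d 0) ε ∧
    (∀ n, Function.Exact (d (n + 1)) (d n))

/-- The class `mod(Λ)` of strongly finitely presented modules. -/
def modFin : Set (ModuleCat.{u} Λ) :=
  {M | StronglyFinitelyPresented Λ M}

/-- The class `P_n^fin` of strongly finitely presented modules of projective dimension `≤ n`. -/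
def PFin (n : ℕ) : Set (ModuleCat.{u} Λ) :=
  {M | StronglyFinitelyPresented Λ M ∧ ProjDimLe Λ n M}

/-- The class `P_∞^fin` of finitely generated modules of finite projective dimension. -/
def PInfFin : Set (ModuleCat.{u} Λ) :=
  {M | Module.Finite Λ M ∧ ∃ n : ℕ, ProjDimLe Λ n M}

/-- The class `GP_n^fin` of strongly finitely presented modules of Gorenstein projective
dimension `≤ n`. -/
def GPFin (n : ℕ) : Set (ModuleCat.{u} Λ) :=
  {M | StronglyFinitelyPresented Λ M ∧ GProjDimLe Λ n M}

/-- The class `GP_∞^fin` of strongly finitely presented modules of finite Gorenstein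
projective dimension. -/
def GPInfFin : Set (ModuleCat.{u} Λ) :=
  {M | StronglyFinitelyPresented Λ M ∧ ∃ n : ℕ, GProjDimLe Λ n M}

/-- `f : X ⟶ M` is a `C`-precover of `M`. -/
def IsPrecover (C : Set (ModuleCat.{u} Λ)) {X M : ModuleCat.{u} Λ} (f : X ⟶ M) : Prop :=
  X ∈ C ∧ ∀ Y ∈ C, ∀ g : Y ⟶ M, ∃ h : Y ⟶ X, h ≫ f = g

/-- `C` is contravariantly finite: every finitely generated module has a `C`-precover. -/
def ContravariantlyFinite (C : Set (ModuleCat.{u} Λ)) : Prop :=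
  ∀ (M : ModuleCat.{u} Λ), Module.Finite Λ M →
    ∃ (X : ModuleCat.{u} Λ) (f : X ⟶ M), IsPrecover Λ C f

/-- `f : X ⟶ M` is a special `C`-precover of `M`: it is surjective, `X ∈ C` and
`ker f ∈ C^⊥`. -/
def IsSpecialPrecover (C : Set (ModuleCat.{u} Λ)) {X M : ModuleCat.{u} Λ} (f : X ⟶ M) : Prop :=
  X ∈ C ∧ Function.Surjective f ∧ ModuleCat.of Λ (LinearMap.ker f.hom) ∈ rightPerp Λ C

/-- `M` admits a finite filtration with factors isomorphic to members of `C`. -/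
def FinitelyFiltered (C : Set (ModuleCat.{u} Λ)) (M : ModuleCat.{u} Λ) : Prop :=
  ∃ (k : ℕ) (F : ℕ → Submodule Λ M),
    F 0 = ⊥ ∧ F k = ⊤ ∧ (∀ i < k, F i ≤ F (i + 1)) ∧
    ∀ i < k, ∃ N ∈ C,
      Nonempty ((↥(F (i + 1)) ⧸ Submodule.comap (F (i + 1)).subtype (F i)) ≃ₗ[Λ] N)

/-- `add(C)`: direct summands of finite direct sums of members of `C`. -/
def addClass (C : Set (ModuleCat.{u} Λ)) : Set (ModuleCat.{u} Λ) :=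
  {M | ∃ (k : ℕ) (N : Fin k → ModuleCat.{u} Λ), (∀ j, N j ∈ C) ∧
    ∃ (i : M ⟶ ModuleCat.of Λ (∀ j, N j)) (r : ModuleCat.of Λ (∀ j, N j) ⟶ M),
      i ≫ r = 𝟙 M}

/-- `U ⋆ V`: modules which are an extension of a module in `U` by a module in `V`,
i.e. middle terms of short exact sequences `0 → A → M → B → 0` with `A ∈ U`, `B ∈ V`. -/
def starClass (U V : Set (ModuleCat.{u} Λ)) : Set (ModuleCat.{u} Λ) :=
  {M | ∃ (A B : ModuleCat.{u} Λ) (i : A ⟶ M) (p : M ⟶ B), A ∈ U ∧ B ∈ V ∧ IsSES Λ i p}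

/-- `U` is closed under extensions. -/
def ExtensionClosed (U : Set (ModuleCat.{u} Λ)) : Prop :=
  ∀ M ∈ starClass Λ U U, M ∈ U

/-- `C` is syzygy-closed: it contains a syzygy of each of its members (hence, iterating,
all the syzygies of some projective resolution of each of its members). -/
def SyzygyClosed (C : Set (ModuleCat.{u} Λ)) : Prop :=
  ∀ M ∈ C, ∃ K ∈ C, IsSyzygyOf Λ K M

/-- `Add(T)`: direct summands of arbitrary direct sums of copies of `T`. -/
def AddClass (T : ModuleCat.{u} Λ) : Set (ModuleCat.{u} Λ) :=
  {M | ∃ (ι : Type u) (i : M ⟶ ModuleCat.of Λ (ι →₀ T)) (r : ModuleCat.of Λ (ι →₀ T) ⟶ M),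
    i ≫ r = 𝟙 M}

/-- `T` is an `n`-tilting module: `pd T ≤ n`, `Ext^{≥1}(T, T^{(κ)}) = 0` for every
cardinal `κ`, and `Λ` admits a finite coresolution by modules in `Add(T)`. -/
def IsTilting (n : ℕ) (T : ModuleCat.{u} Λ) : Prop :=
  ProjDimLe Λ n T ∧
  (∀ ι : Type u, ExtGe1Zero Λ T (ModuleCat.of Λ (ι →₀ T))) ∧
  ∃ m : ℕ, CoresolDimLe Λ (AddClass Λ T) m (ModuleCat.of Λ Λ)

/-- `Λ` is an Artin algebra: an algebra over some commutative artinian ring `R` which is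
finitely generated as an `R`-module. -/
def IsArtinAlgebra : Prop :=
  ∃ (R : Type u) (_ : CommRing R) (_ : IsArtinianRing R) (_ : Algebra R Λ),
    Module.Finite R Λ

end GorensteinFDC

/-!
A finitely generated module is a compact element of its submodule lattice, so it cannot be the
union of a strictly increasing chain of smaller submodules: no `M_λ` with `λ` a limit ordinal is
finitely generated. On the other hand, the kernel of a surjection from a finitely generated
module onto a finitely presented one is finitely generated, so finite generation of `M_{α+1}`
passes down to `M_α`. Descending from `M_σ = M` therefore never meets a
limit ordinal, which forces `σ < ω`.
-/

namespace Ordinal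

variable {α : Type*} [CompleteLattice α] {σ : Ordinal} {F : Ordinal → α}

theorem monotoneOn_Iic_of_le_add_one (hsucc : ∀ β < σ, F β ≤ F (β + 1))
    (hlim : ∀ γ ≤ σ, Order.IsSuccLimit γ → F γ = ⨆ β ∈ Set.Iio γ, F β) :
    MonotoneOn F (Set.Iic σ) := by
  suffices h : ∀ γ ≤ σ, ∀ β ≤ γ, F β ≤ F γ from fun β _ γ hγ hβγ => h γ hγ β hβγ
  intro γ
  induction γ using Ordinal.limitRecOn with
  | zero => intro _ β hβ; rw [nonpos_iff_eq_zero.mp hβ]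
  | add_one τ ih =>
    intro hτσ β hβ
    rcases hβ.eq_or_lt with rfl | hβτ
    · exact le_rfl
    have hτ : τ < σ := (Order.lt_add_one_iff.mpr le_rfl).trans_le hτσ
    exact (ih hτ.le β (Order.lt_add_one_iff.mp hβτ)).trans (hsucc τ hτ)
  | limit γ hγ _ =>
    intro hγσ β hβ
    rcases hβ.eq_or_lt with rfl | hβγ
    · exact le_rfl
    rw [hlim γ hγσ hγ]
    exact le_iSup₂_of_le β hβγ le_rfl

theorem not_isCompactElement_of_isSuccLimit (hstrict : ∀ β < σ, F β < F (β + 1))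
    (hlim : ∀ γ ≤ σ, Order.IsSuccLimit γ → F γ = ⨆ β ∈ Set.Iio γ, F β)
    {γ : Ordinal} (hγσ : γ ≤ σ) (hγ : Order.IsSuccLimit γ) : ¬IsCompactElement (F γ) := by
  intro hcompact
  have hmono := monotoneOn_Iic_of_le_add_one (fun β hβ => (hstrict β hβ).le) hlim
  have hdir : DirectedOn (· ≤ ·) (F '' Set.Iio γ) :=
    directedOn_image.mpr fun β hβ β' hβ' =>
      have hmax : max β β' ≤ σ := (max_lt hβ hβ').le.trans hγσ
      ⟨max β β', Set.mem_Iio.mpr (max_lt hβ hβ'), hmono (hβ.le.trans hγσ) hmax (le_max_left β β'),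
        hmono (hβ'.le.trans hγσ) hmax (le_max_right β β')⟩
  have hbelow : ∀ x ∈ F '' Set.Iio γ, x < F γ := by
    rintro _ ⟨β, hβ, rfl⟩
    have hβ1 : β + 1 ≤ γ := Order.add_one_le_of_lt hβ
    exact (hstrict β (hβ.trans_le hγσ)).trans_le (hmono (hβ1.trans hγσ) hγσ hβ1)
  have hne : (F '' Set.Iio γ).Nonempty := ⟨F 0, 0, hγ.bot_lt, rfl⟩
  have := CompleteLattice.IsCompactElement.directed_sSup_lt_of_lt hcompact hne hdir hbelow
  rw [sSup_image, ← hlim γ hγσ hγ] at this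
  exact this.false

end Ordinal

namespace Submodule

variable {R M : Type*} [Ring R] [AddCommGroup M] [Module R M]

theorem fg_of_fg_of_finitePresentation_quotient {N P : Submodule R M} (hNP : N ≤ P) (hP : P.FG)
    [Module.FinitePresentation R (P ⧸ N.comap P.subtype)] : N.FG := by
  have : Module.Finite R P := Module.Finite.iff_fg.mpr hP
  have hker : (N.comap P.subtype).FG := by
    simpa only [ker_mkQ] using
      Module.FinitePresentation.fg_ker (N.comap P.subtype).mkQ (mkQ_surjective _)
  simpa only [map_comap_subtype, inf_eq_right.mpr hNP] using hker.map P.subtype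

theorem lt_omega0_of_fg_of_strictChain {σ : Ordinal} {F : Ordinal → Submodule R M}
    (hstrict : ∀ β < σ, F β < F (β + 1))
    (hlim : ∀ γ ≤ σ, Order.IsSuccLimit γ → F γ = ⨆ β ∈ Set.Iio γ, F β)
    (hfp : ∀ β < σ, Module.FinitePresentation R (F (β + 1) ⧸ (F β).comap (F (β + 1)).subtype))
    {γ : Ordinal} (hγσ : γ ≤ σ) (hγ : (F γ).FG) : γ < Ordinal.omega0 := by
  induction γ using Ordinal.limitRecOn with
  | zero => exact Ordinal.omega0_pos
  | add_one τ ih =>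
    have hτ : τ < σ := (Order.lt_add_one_iff.mpr le_rfl).trans_le hγσ
    have := hfp τ hτ
    have hτfg := fg_of_fg_of_finitePresentation_quotient (hstrict τ hτ).le hγ
    exact Ordinal.isSuccLimit_omega0.add_one_lt (ih hτ.le hτfg)
  | limit γ hlimγ _ =>
    exact absurd (fg_iff_compact _ |>.mp hγ)
      (Ordinal.not_isCompactElement_of_isSuccLimit hstrict hlim hγσ hlimγ)

end Submodule

open GorensteinFDC in
theorem statement0_general (Λ : Type u) [Ring Λ] (C : Set (ModuleCat.{u} Λ))
    (hC : ∀ N ∈ C, Module.FinitePresentation Λ N)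
    (M : ModuleCat.{u} Λ) (hM : Module.Finite Λ M)
    (σ : Ordinal.{u}) (F : Ordinal.{u} → Submodule Λ M)
    (htop : F σ = ⊤)
    (hstrict : ∀ α < σ, F α < F (α + 1))
    (hlim : ∀ α ≤ σ, Order.IsSuccLimit α → F α = ⨆ β ∈ Set.Iio α, F β)
    (hfactor : ∀ α < σ, ∃ N ∈ C,
      Nonempty ((↥(F (α + 1)) ⧸ Submodule.comap (F (α + 1)).subtype (F α)) ≃ₗ[Λ] ↥N)) :
    σ < Ordinal.omega0 := by
  have hfp (α : Ordinal) (hα : α < σ) :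
      Module.FinitePresentation Λ (F (α + 1) ⧸ (F α).comap (F (α + 1)).subtype) := by
    obtain ⟨N, hN, ⟨e⟩⟩ := hfactor α hα
    have := hC N hN
    exact Module.FinitePresentation.of_equiv e.symm
  have hσ : (F σ).FG := htop ▸ hM.fg_top
  exact Submodule.lt_omega0_of_fg_of_strictChain hstrict hlim hfp le_rfl hσ

open GorensteinFDC in
/-- If `{M_α}_{α ≤ σ}` is a strict `C`-filtration of a finitely generated
module `M`, where `C` consists of finitely presented modules, then `σ` is finite. -/
theorem statement0 (Λ : Type u) [Ring Λ] (C : Set (ModuleCat.{u} Λ))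
    (hC : ∀ N ∈ C, Module.FinitePresentation Λ N)
    (M : ModuleCat.{u} Λ) (hM : Module.Finite Λ M)
    (σ : Ordinal.{u}) (F : Ordinal.{u} → Submodule Λ M)
    (hbot : F 0 = ⊥) (htop : F σ = ⊤)
    (hstrict : ∀ α < σ, F α < F (α + 1))
    (hlim : ∀ α ≤ σ, Order.IsSuccLimit α → F α = ⨆ β ∈ Set.Iio α, F β)
    (hfactor : ∀ α < σ, ∃ N ∈ C,
      Nonempty ((↥(F (α + 1)) ⧸ Submodule.comap (F (α + 1)).subtype (F α)) ≃ₗ[Λ] ↥N)) :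
    σ < Ordinal.omega0 :=
  statement0_general Λ C hC M hM σ F htop hstrict hlim hfactor
end

section
/- Let Λ be a ring, T an n-tilting Λ-module, S a strongly Gorenstein projective Λ-module, and set U := T ⊕ S. If (L_U, R_U) is the cotorsion pair with R_U = U^{⊥∞}, then L_U ∩ P_n = ^⊥(T^{⊥∞}), where P_n is the class of left Λ-modules of projective dimension at most n. -/
/-!
Every `Ext`-vanishing condition is reduced to `Ext¹` by dimension shifting along cosyzygies
`0 → Y → I → ΣY → 0` with `I` injective (`ΣY = cosyzygy Y`): for an `n`-th syzygy `K` of `A`,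
`Ext¹(K, Y) = 0 ↔ Ext¹(A, Σⁿ Y) = 0`, whatever syzygies were chosen.

Since `T` is a summand of `U`, `U^{⊥∞} ⊆ T^{⊥∞}`, so `^⊥(T^{⊥∞}) ⊆ L_U`; and since `pd T ≤ n`,
`T^{⊥∞}` contains every `Σⁿ W`, which forces `pd X ≤ n` for `X ∈ ^⊥(T^{⊥∞})`.
Conversely, every `Y ∈ T^{⊥∞}` has a tilting approximation `0 → Y₁ → T^{(κ)} → Y → 0` with
`Y₁ ∈ T^{⊥∞}` (the evaluation map is onto because `Λ` has a finite `Add T`-coresolution), and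
`T^{(κ)} ∈ U^{⊥∞}` because the strongly Gorenstein projective `S` is `Ext`-orthogonal to modules
of finite projective dimension. For `X ∈ L_U` with `pd X ≤ n`, `Ext¹(X, Y)` then sits between
`Ext¹(X, T^{(κ)}) = 0` and `Ext¹(ΩX, Y₁)`, which vanishes by induction on `pd X`, as `L_U` is
closed under syzygies.
-/

open CategoryTheory Function

universe u

namespace GorensteinFDC

variable {Λ : Type u} [Ring Λ]

section ShortExact

variable {A M B : ModuleCat.{u} Λ} {i : A ⟶ M} {p : M ⟶ B}

theorem IsSES.comp_eq_zero (h : IsSES Λ i p) : i ≫ p = 0 := by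
  ext a; exact h.2.2.apply_apply_eq_zero a

theorem IsSES.shortExact (h : IsSES Λ i p) : (ShortComplex.mk i p h.comp_eq_zero).ShortExact :=
  ModuleCat.shortComplex_shortExact _ h.2.2 h.1 h.2.1

theorem IsSES.exists_lift (h : IsSES Λ i p) {E : ModuleCat.{u} Λ} (φ : E ⟶ M)
    (hφ : φ ≫ p = 0) : ∃ r : E ⟶ A, r ≫ i = φ :=
  have := h.shortExact.mono_f
  ⟨h.shortExact.exact.lift φ hφ, h.shortExact.exact.lift_f φ hφ⟩

theorem IsSES.exists_desc (h : IsSES Λ i p) {N : ModuleCat.{u} Λ} (q : M ⟶ N)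
    (hq : i ≫ q = 0) : ∃ s : B ⟶ N, p ≫ s = q :=
  have := h.shortExact.epi_g
  ⟨h.shortExact.exact.desc q hq, h.shortExact.exact.g_desc q hq⟩

theorem IsSES.exists_section_iff (h : IsSES Λ i p) :
    (∃ s : B ⟶ M, s ≫ p = 𝟙 B) ↔ ∃ r : M ⟶ A, i ≫ r = 𝟙 A := by
  have := h.shortExact.mono_f
  have := h.shortExact.epi_g
  constructor
  · rintro ⟨s, hs⟩
    exact ⟨_, (ShortComplex.Splitting.ofExactOfSection _ h.shortExact.exact s hs ‹_›).f_r⟩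
  · rintro ⟨r, hr⟩
    exact ⟨_, (ShortComplex.Splitting.ofExactOfRetraction _ h.shortExact.exact r hr ‹_›).s_g⟩

theorem isSES_subtype_ker (p : M ⟶ B) (hp : Function.Surjective p) :
    IsSES Λ (ModuleCat.ofHom (LinearMap.ker p.hom).subtype) p :=
  ⟨Subtype.val_injective, hp, LinearMap.exact_subtype_ker_map p.hom⟩

theorem IsSES.exists_pullback (h : IsSES Λ i p) {N : ModuleCat.{u} Λ} (g : N ⟶ B) :
    ∃ (P : ModuleCat.{u} Λ) (i' : A ⟶ P) (p' : P ⟶ N) (π : P ⟶ M),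
      IsSES Λ i' p' ∧ π ≫ p = p' ≫ g := by
  let P := LinearMap.ker (p.hom ∘ₗ LinearMap.fst Λ M N - g.hom ∘ₗ LinearMap.snd Λ M N)
  have mem : ∀ x : M × N, x ∈ P ↔ p x.1 = g x.2 := fun x => sub_eq_zero
  refine ⟨ModuleCat.of Λ P,
    ModuleCat.ofHom (LinearMap.codRestrict P (LinearMap.inl Λ M N ∘ₗ i.hom) fun a =>
      (mem _).2 (by simp [h.2.2.apply_apply_eq_zero])),
    ModuleCat.ofHom (LinearMap.snd Λ M N ∘ₗ P.subtype),
    ModuleCat.ofHom (LinearMap.fst Λ M N ∘ₗ P.subtype), ⟨?_, ?_, ?_⟩, ?_⟩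
  · exact fun a a' haa => h.1 (congrArg (fun x : P => x.1.1) haa)
  · intro n
    obtain ⟨m, hm⟩ := h.2.1 (g n)
    exact ⟨⟨(m, n), (mem _).2 hm⟩, rfl⟩
  · rintro ⟨⟨m, n⟩, hx⟩
    change n = 0 ↔ ∃ a, (⟨(i a, 0), _⟩ : P) = ⟨(m, n), hx⟩
    constructor
    · rintro rfl
      obtain ⟨a, rfl⟩ := (h.2.2 m).1 (by simpa using (mem _).1 hx)
      exact ⟨a, rfl⟩
    · rintro ⟨a, ha⟩
      exact (congrArg (fun x : P => x.1.2) ha).symm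
  · ext ⟨⟨m, n⟩, hx⟩
    exact (mem _).1 hx

end ShortExact

noncomputable def cosyzygy (Y : ModuleCat.{u} Λ) : ModuleCat.{u} Λ :=
  ModuleCat.of Λ (↥(Injective.under Y) ⧸ LinearMap.range (Injective.ι Y).hom)

noncomputable def toCosyzygy (Y : ModuleCat.{u} Λ) : Injective.under Y ⟶ cosyzygy Y :=
  ModuleCat.ofHom (LinearMap.range (Injective.ι Y).hom).mkQ

theorem isSES_cosyzygy (Y : ModuleCat.{u} Λ) : IsSES Λ (Injective.ι Y) (toCosyzygy Y) :=
  ⟨(ModuleCat.mono_iff_injective _).1 inferInstance, Submodule.mkQ_surjective _,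
    LinearMap.exact_map_mkQ_range _⟩

theorem exists_isSyzygyOf (M : ModuleCat.{u} Λ) : ∃ K, IsSyzygyOf Λ K M := by
  let π : ModuleCat.of Λ (M →₀ Λ) ⟶ M := ModuleCat.ofHom (Finsupp.linearCombination Λ id)
  have hπ : Function.Surjective π := fun m => ⟨Finsupp.single m 1, by simp [π]⟩
  exact ⟨_, _, _, π, ModuleCat.projective_of_free (Finsupp.basisSingleOne),
    isSES_subtype_ker π hπ⟩

theorem exists_isNthSyzygyOf (n : ℕ) (M : ModuleCat.{u} Λ) : ∃ K, IsNthSyzygyOf Λ n K M := by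
  induction n with
  | zero => exact ⟨M, ⟨Iso.refl M⟩⟩
  | succ n ih =>
    obtain ⟨L, hL⟩ := ih
    obtain ⟨K, hK⟩ := exists_isSyzygyOf L
    exact ⟨K, L, hL, hK⟩

namespace Ext1Zero

variable {A A' B C E K Q : ModuleCat.{u} Λ}

theorem of_projective [Projective A] : Ext1Zero Λ A B := fun _ _ p h =>
  have := h.shortExact.epi_g
  ⟨Projective.factorThru (𝟙 A) p, Projective.factorThru_comp _ _⟩

theorem of_injective [Injective B] : Ext1Zero Λ A B := fun _ i _ h =>
  have := h.shortExact.mono_f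
  h.exists_section_iff.2 ⟨Injective.factorThru (𝟙 B) i, Injective.comp_factorThru _ _⟩

theorem exists_lift (hK : Ext1Zero Λ K A) {a : A ⟶ B} {b : B ⟶ C} (h : IsSES Λ a b)
    (g : K ⟶ C) : ∃ g' : K ⟶ B, g' ≫ b = g := by
  obtain ⟨P, i', p', π, hP, hπ⟩ := h.exists_pullback g
  obtain ⟨s, hs⟩ := hK P i' p' hP
  exact ⟨s ≫ π, by rw [Category.assoc, hπ, ← Category.assoc, hs, Category.id_comp]⟩

theorem of_retract (r : Retract A A') (h : Ext1Zero Λ A' B) : Ext1Zero Λ A B := fun _ _ p hE => by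
  obtain ⟨ℓ, hℓ⟩ := h.exists_lift hE r.r
  exact ⟨r.i ≫ ℓ, by rw [Category.assoc, hℓ, r.retract]⟩

/-- Extend `u ≫ Injective.ι B` over `E` by injectivity; the error term is a map `Q ⟶ cosyzygy B`,
which lifts to `Injective.under B` because `Ext¹(Q, B) = 0`. -/
theorem exists_extend (hQ : Ext1Zero Λ Q B) {α : A ⟶ E} {β : E ⟶ Q} (h : IsSES Λ α β)
    (u : A ⟶ B) : ∃ φ : E ⟶ B, α ≫ φ = u := by
  have := h.shortExact.mono_f
  have hB := isSES_cosyzygy B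
  have := hB.shortExact.mono_f
  let v := Injective.factorThru (u ≫ Injective.ι B) α
  have hv : α ≫ v = u ≫ Injective.ι B := Injective.comp_factorThru _ _
  obtain ⟨w, hw⟩ := h.exists_desc (v ≫ toCosyzygy B)
    (by rw [← Category.assoc, hv, Category.assoc, hB.comp_eq_zero, Limits.comp_zero])
  obtain ⟨w', hw'⟩ := hQ.exists_lift hB w
  obtain ⟨φ, hφ⟩ := hB.exists_lift (v - β ≫ w')
    (by rw [Preadditive.sub_comp, Category.assoc, hw', hw, sub_self])
  refine ⟨φ, (cancel_mono (Injective.ι B)).1 ?_⟩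
  rw [Category.assoc, hφ, Preadditive.comp_sub, hv, ← Category.assoc, h.comp_eq_zero,
    Limits.zero_comp, sub_zero]

theorem prod (h : Ext1Zero Λ A B) (h' : Ext1Zero Λ A' B) :
    Ext1Zero Λ (ModuleCat.of Λ (A × A')) B := fun _ _ _ hE => by
  obtain ⟨σ, hσ⟩ := h.exists_lift hE (ModuleCat.ofHom (LinearMap.inl Λ A A'))
  obtain ⟨σ', hσ'⟩ := h'.exists_lift hE (ModuleCat.ofHom (LinearMap.inr Λ A A'))
  refine ⟨ModuleCat.ofHom (σ.hom ∘ₗ LinearMap.fst Λ A A' + σ'.hom ∘ₗ LinearMap.snd Λ A A'), ?_⟩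
  ext : 1
  refine LinearMap.prod_ext ?_ ?_ <;> ext x : 1
  · simpa using congr($hσ x)
  · simpa using congr($hσ' x)

theorem finsupp (ι : Type u) (h : Ext1Zero Λ A B) :
    Ext1Zero Λ (ModuleCat.of Λ (ι →₀ A)) B := fun _ _ _ hE => by
  choose σ hσ using fun k => h.exists_lift hE (ModuleCat.ofHom (Finsupp.lsingle k))
  refine ⟨ModuleCat.ofHom (Finsupp.lsum ℕ fun k => (σ k).hom), ?_⟩
  ext : 1
  refine Finsupp.lhom_ext' fun k => ?_
  ext x : 1
  simpa using congr($(hσ k) x)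

end Ext1Zero

section LongExactSequence

variable {A B C K L M P Q X Y Y₁ T₀ : ModuleCat.{u} Λ}

/-- `Ext¹(L, Q)` is the cokernel of `Hom(P, Q) → Hom(K, Q)`. -/
theorem ext1Zero_of_forall_extend {ι : K ⟶ P} {π : P ⟶ L} (h : IsSES Λ ι π) (hP : Projective P)
    (hext : ∀ u : K ⟶ Q, ∃ v : P ⟶ Q, ι ≫ v = u) : Ext1Zero Λ L Q := fun E α β hE => by
  have := hE.shortExact.epi_g
  have := h.shortExact.epi_g
  let γ := Projective.factorThru π β
  have hγ : γ ≫ β = π := Projective.factorThru_comp _ _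
  obtain ⟨u, hu⟩ := hE.exists_lift (ι ≫ γ) (by rw [Category.assoc, hγ, h.comp_eq_zero])
  obtain ⟨v, hv⟩ := hext u
  obtain ⟨s, hs⟩ := h.exists_desc (γ - v ≫ α)
    (by rw [Preadditive.comp_sub, ← Category.assoc, hv, hu, sub_self])
  refine ⟨s, (cancel_epi π).1 ?_⟩
  rw [← Category.assoc, hs, Preadditive.sub_comp, hγ, Category.assoc, hE.comp_eq_zero,
    Limits.comp_zero, sub_zero, Category.comp_id]

/-- Exactness of `Hom(K, B) → Hom(K, C) → Ext¹(K, A) → Ext¹(K, B)`. -/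
theorem ext1Zero_of_forall_lift {a : A ⟶ B} {b : B ⟶ C} (h : IsSES Λ a b)
    (hB : Ext1Zero Λ K B) (hlift : ∀ ψ : K ⟶ C, ∃ χ : K ⟶ B, χ ≫ b = ψ) :
    Ext1Zero Λ K A := fun E α β hE => by
  have := h.shortExact.mono_f
  obtain ⟨φ, hφ⟩ := hB.exists_extend hE a
  obtain ⟨ψ, hψ⟩ := hE.exists_desc (φ ≫ b)
    (by rw [← Category.assoc, hφ, h.comp_eq_zero])
  obtain ⟨χ, hχ⟩ := hlift ψ
  obtain ⟨r, hr⟩ := h.exists_lift (φ - β ≫ χ)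
    (by rw [Preadditive.sub_comp, Category.assoc, hχ, hψ, sub_self])
  refine hE.exists_section_iff.2 ⟨r, (cancel_mono a).1 ?_⟩
  rw [Category.assoc, hr, Preadditive.comp_sub, hφ, ← Category.assoc, hE.comp_eq_zero,
    Limits.zero_comp, sub_zero, Category.id_comp]

/-- `Ext¹(X, T₀) → Ext¹(X, Y) → Ext²(X, Y₁)`, with `Ext²(X, -) = Ext¹(K, -)`. -/
theorem ext1Zero_cokernel_of_isSES {a : Y₁ ⟶ T₀} {t : T₀ ⟶ Y} (h : IsSES Λ a t)
    (hK : IsSyzygyOf Λ K X) (hX : Ext1Zero Λ X T₀) (hY₁ : Ext1Zero Λ K Y₁) :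
    Ext1Zero Λ X Y := by
  obtain ⟨P, ι, π, hP, hKPX⟩ := hK
  refine ext1Zero_of_forall_extend hKPX hP fun u => ?_
  obtain ⟨u', hu'⟩ := hY₁.exists_lift h u
  obtain ⟨v, hv⟩ := hX.exists_extend hKPX u'
  exact ⟨v ≫ t, by rw [← Category.assoc, hv, hu']⟩

/-- `Ext¹(M, C) → Ext²(M, A) → Ext²(M, B)`, with `Ext²(M, -) = Ext¹(K, -)`. -/
theorem ext1Zero_kernel_of_isSES {a : A ⟶ B} {b : B ⟶ C} (h : IsSES Λ a b)
    (hK : IsSyzygyOf Λ K M) (hM : Ext1Zero Λ M C) (hB : Ext1Zero Λ K B) :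
    Ext1Zero Λ K A := by
  obtain ⟨P, ι, π, hP, hKPM⟩ := hK
  refine ext1Zero_of_forall_lift h hB fun ψ => ?_
  have := h.shortExact.epi_g
  obtain ⟨v, hv⟩ := hM.exists_extend hKPM ψ
  exact ⟨ι ≫ Projective.factorThru v b, by rw [Category.assoc, Projective.factorThru_comp, hv]⟩

end LongExactSequence

theorem IsSyzygyOf.ext1Zero_iff {K L Y : ModuleCat.{u} Λ} (hK : IsSyzygyOf Λ K L) :
    Ext1Zero Λ K Y ↔ Ext1Zero Λ L (cosyzygy Y) :=
  ⟨fun h => ext1Zero_cokernel_of_isSES (isSES_cosyzygy Y) hK .of_injective h,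
    fun h => ext1Zero_kernel_of_isSES (isSES_cosyzygy Y) hK h .of_injective⟩

theorem IsNthSyzygyOf.ext1Zero_iff {n : ℕ} {K A Y : ModuleCat.{u} Λ}
    (hK : IsNthSyzygyOf Λ n K A) : Ext1Zero Λ K Y ↔ Ext1Zero Λ A (cosyzygy^[n] Y) := by
  induction n generalizing K Y with
  | zero =>
    obtain ⟨e⟩ := hK
    exact ⟨.of_retract e.symm.retract, .of_retract e.retract⟩
  | succ n ih =>
    obtain ⟨L, hL, hKL⟩ := hK
    exact hKL.ext1Zero_iff.trans (ih hL)

theorem extGe1Zero_iff {A Y : ModuleCat.{u} Λ} :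
    ExtGe1Zero Λ A Y ↔ ∀ n, Ext1Zero Λ A (cosyzygy^[n] Y) :=
  ⟨fun h n => by
    obtain ⟨K, hK⟩ := exists_isNthSyzygyOf n A
    exact hK.ext1Zero_iff.1 (h n K hK),
  fun h n _ hK => hK.ext1Zero_iff.2 (h n)⟩

namespace ExtGe1Zero

variable {A A' B C Y : ModuleCat.{u} Λ}

theorem of_retract (r : Retract A A') (h : ExtGe1Zero Λ A' Y) : ExtGe1Zero Λ A Y :=
  extGe1Zero_iff.2 fun n => (extGe1Zero_iff.1 h n).of_retract r

theorem prod (h : ExtGe1Zero Λ A Y) (h' : ExtGe1Zero Λ A' Y) :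
    ExtGe1Zero Λ (ModuleCat.of Λ (A × A')) Y :=
  extGe1Zero_iff.2 fun n => (extGe1Zero_iff.1 h n).prod (extGe1Zero_iff.1 h' n)

theorem finsupp (ι : Type u) (h : ExtGe1Zero Λ A Y) :
    ExtGe1Zero Λ (ModuleCat.of Λ (ι →₀ A)) Y :=
  extGe1Zero_iff.2 fun n => (extGe1Zero_iff.1 h n).finsupp ι

theorem of_prod (h : ExtGe1Zero Λ (ModuleCat.of Λ (A × A')) Y) : ExtGe1Zero Λ A Y :=
  h.of_retract ⟨ModuleCat.ofHom (LinearMap.inl Λ A A'), ModuleCat.ofHom (LinearMap.fst Λ A A'), rfl⟩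

/-- The long exact sequence `Ext¹(B, Z) → Ext¹(A, Z) → Ext²(C, Z)`, with
`Ext²(C, Z) = Ext¹(C, cosyzygy Z)`. -/
theorem of_isSES {a : A ⟶ B} {b : B ⟶ C} (h : IsSES Λ a b) (hB : ExtGe1Zero Λ B Y)
    (hC : ExtGe1Zero Λ C Y) : ExtGe1Zero Λ A Y := by
  refine extGe1Zero_iff.2 fun n => ?_
  set Z := cosyzygy^[n] Y
  have hZ := isSES_cosyzygy Z
  have hCZ : Ext1Zero Λ C (cosyzygy Z) := by
    simpa [Z, ← Function.iterate_succ_apply'] using extGe1Zero_iff.1 hC (n + 1)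
  refine ext1Zero_of_forall_lift hZ .of_injective fun ψ => ?_
  obtain ⟨φ, hφ⟩ := hCZ.exists_extend h ψ
  obtain ⟨φ', hφ'⟩ := (extGe1Zero_iff.1 hB n).exists_lift hZ φ
  exact ⟨a ≫ φ', by rw [Category.assoc, hφ', hφ]⟩

theorem cosyzygy (h : ExtGe1Zero Λ A Y) : ExtGe1Zero Λ A (GorensteinFDC.cosyzygy Y) :=
  extGe1Zero_iff.2 fun n => extGe1Zero_iff.1 h (n + 1)

end ExtGe1Zero

theorem projective_of_forall_ext1Zero {M : ModuleCat.{u} Λ} (h : ∀ W, Ext1Zero Λ M W) :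
    Projective M := by
  obtain ⟨K, P, ι, π, hP, hKPM⟩ := exists_isSyzygyOf M
  obtain ⟨s, hs⟩ := h K P ι π hKPM
  exact Retract.projective ⟨s, π, hs⟩

theorem projDimLe_iff {n : ℕ} {M : ModuleCat.{u} Λ} :
    ProjDimLe Λ n M ↔ ∀ W, Ext1Zero Λ M (cosyzygy^[n] W) := by
  induction n generalizing M with
  | zero => exact ⟨fun h _ => @Ext1Zero.of_projective _ _ _ _ h, projective_of_forall_ext1Zero⟩
  | succ n ih =>
    simp only [Function.iterate_succ_apply']
    constructor
    · rintro ⟨K, P, ι, π, hP, hKPM, hK⟩ W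
      exact IsSyzygyOf.ext1Zero_iff ⟨P, ι, π, hP, hKPM⟩ |>.1 (ih.1 hK W)
    · intro h
      obtain ⟨K, P, ι, π, hP, hKPM⟩ := exists_isSyzygyOf M
      exact ⟨K, P, ι, π, hP, hKPM, ih.2 fun W =>
        IsSyzygyOf.ext1Zero_iff ⟨P, ι, π, hP, hKPM⟩ |>.2 (h W)⟩

namespace ProjDimLe

variable {n : ℕ} {M T X : ModuleCat.{u} Λ}

theorem finsupp (ι : Type u) (h : ProjDimLe Λ n M) : ProjDimLe Λ n (ModuleCat.of Λ (ι →₀ M)) :=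
  projDimLe_iff.2 fun W => (projDimLe_iff.1 h W).finsupp ι

theorem cosyzygy_iterate_mem_perpInfOf (hT : ProjDimLe Λ n T) (W : ModuleCat.{u} Λ) :
    cosyzygy^[n] W ∈ perpInfOf Λ T :=
  extGe1Zero_iff.2 fun m => by
    rw [← Function.iterate_add_apply, add_comm, Function.iterate_add_apply]
    exact projDimLe_iff.1 hT _

theorem of_mem_leftPerp (hT : ProjDimLe Λ n T) (hX : X ∈ leftPerp Λ (perpInfOf Λ T)) :
    ProjDimLe Λ n X :=
  projDimLe_iff.2 fun W => hX _ (hT.cosyzygy_iterate_mem_perpInfOf W)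

end ProjDimLe

theorem IsStronglyGorensteinProjective.extGe1Zero {S M : ModuleCat.{u} Λ}
    (hS : IsStronglyGorensteinProjective Λ S) {j : ℕ} (hM : ProjDimLe Λ j M) :
    ExtGe1Zero Λ S M := by
  obtain ⟨P, f, hP, hf, hlift, ⟨e⟩⟩ := hS
  -- `f` factors as `P ↠ ker f ↪ P`, which makes `ker f` a syzygy of itself.
  let K := ModuleCat.of Λ (LinearMap.ker f.hom)
  let ι : K ⟶ P := ModuleCat.ofHom (LinearMap.ker f.hom).subtype
  let π : P ⟶ K := ModuleCat.ofHom (f.hom.codRestrict _ hf.apply_apply_eq_zero)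
  have hπι : π ≫ ι = f := rfl
  have hKPK : IsSES Λ ι π := by
    refine ⟨Subtype.val_injective, fun ⟨y, hy⟩ => ?_, fun x => ?_⟩
    · obtain ⟨x, rfl⟩ := (hf y).1 hy
      exact ⟨x, rfl⟩
    · exact ⟨fun hx => ⟨⟨x, congrArg Subtype.val hx⟩, rfl⟩, fun ⟨k, hk⟩ => hk ▸ Subtype.ext k.2⟩
  have hK : ∀ m, IsNthSyzygyOf Λ m K S := by
    intro m
    induction m with
    | zero => exact ⟨e.symm.toModuleIso⟩
    | succ m ih => exact ⟨K, ih, P, ι, π, hP, hKPK⟩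
  have hproj : ∀ Q, Projective Q → Ext1Zero Λ K Q := fun Q hQ =>
    ext1Zero_of_forall_extend hKPK hP fun u => by
      have := hKPK.shortExact.epi_g
      obtain ⟨v, hv⟩ := hlift Q hQ (π ≫ u) (by
        rw [← hπι, Category.assoc, ← Category.assoc ι, hKPK.comp_eq_zero, Limits.zero_comp,
          Limits.comp_zero])
      exact ⟨v, (cancel_epi π).1 (by rw [← Category.assoc, hπι, hv])⟩
  have hKM : ∀ {k N}, ProjDimLe Λ k N → Ext1Zero Λ K N := by
    intro k
    induction k with
    | zero => exact fun hN => hproj _ hN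
    | succ k ih =>
      rintro N ⟨N₁, G, i, p, hG, hses, hN₁⟩
      exact ext1Zero_cokernel_of_isSES hses ⟨P, ι, π, hP, hKPK⟩ (hproj G hG) (ih hN₁)
  exact fun m _ hK' => hK'.ext1Zero_iff.2 ((hK m).ext1Zero_iff.1 (hKM hM))

section Tilting

variable {n : ℕ} {T Y : ModuleCat.{u} Λ}

theorem ExtGe1Zero.of_mem_addClass (hY : ExtGe1Zero Λ T Y) {U : ModuleCat.{u} Λ}
    (hU : U ∈ AddClass Λ T) : ExtGe1Zero Λ U Y :=
  let ⟨ι, i, r, hir⟩ := hU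
  (hY.finsupp ι).of_retract ⟨i, r, hir⟩

theorem ExtGe1Zero.of_coresolDimLe (hY : ExtGe1Zero Λ T Y) {m : ℕ} {V : ModuleCat.{u} Λ}
    (hV : CoresolDimLe Λ (AddClass Λ T) m V) : ExtGe1Zero Λ V Y := by
  induction m generalizing V with
  | zero => exact hY.of_mem_addClass hV
  | succ m ih =>
    obtain ⟨U₀, V₁, i, p, hU₀, hses, hV₁⟩ := hV
    exact .of_isSES hses (hY.of_mem_addClass hU₀) (ih hV₁)

noncomputable def sumEval (T Y : ModuleCat.{u} Λ) : ModuleCat.of Λ ((T ⟶ Y) →₀ T) ⟶ Y :=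
  ModuleCat.ofHom (Finsupp.lsum ℕ fun g => g.hom)

theorem range_le_range_sumEval {ι : Type u} (g : ModuleCat.of Λ (ι →₀ T) ⟶ Y) :
    LinearMap.range g.hom ≤ LinearMap.range (sumEval T Y).hom := by
  have : g.hom = (sumEval T Y).hom ∘ₗ
      Finsupp.lsum ℕ fun k => Finsupp.lsingle (ModuleCat.ofHom (g.hom ∘ₗ Finsupp.lsingle k)) := by
    ext k t
    simp [sumEval]
  rw [this]
  exact LinearMap.range_comp_le_range _ _

theorem CoresolDimLe.exists_factor_finsupp {m : ℕ}
    (hΛ : CoresolDimLe Λ (AddClass Λ T) m (ModuleCat.of Λ Λ)) (hY : ExtGe1Zero Λ T Y)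
    (χ : ModuleCat.of Λ Λ ⟶ Y) :
    ∃ (ι : Type u) (w : ModuleCat.of Λ Λ ⟶ ModuleCat.of Λ (ι →₀ T))
      (Ψ : ModuleCat.of Λ (ι →₀ T) ⟶ Y), w ≫ Ψ = χ := by
  cases m with
  | zero =>
    obtain ⟨ι, i, r, hir⟩ := hΛ
    exact ⟨ι, i, r ≫ χ, by rw [← Category.assoc, hir, Category.id_comp]⟩
  | succ m =>
    obtain ⟨U₀, V₁, i, p, ⟨ι, iU, rU, hir⟩, hses, hV₁⟩ := hΛ
    obtain ⟨φ, hφ⟩ := (hY.of_coresolDimLe hV₁ 0 V₁ ⟨Iso.refl V₁⟩).exists_extend hses χ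
    exact ⟨ι, i ≫ iU, rU ≫ φ, by
      rw [Category.assoc, ← Category.assoc iU, hir, Category.id_comp, hφ]⟩

theorem IsTilting.surjective_sumEval (hT : IsTilting Λ n T) (hY : ExtGe1Zero Λ T Y) :
    Function.Surjective (sumEval T Y) := fun y => by
  obtain ⟨-, -, m, hΛ⟩ := hT
  obtain ⟨ι, w, Ψ, hwΨ⟩ :=
    hΛ.exists_factor_finsupp hY (ModuleCat.ofHom (LinearMap.toSpanSingleton Λ Y y))
  obtain ⟨x, hx⟩ := range_le_range_sumEval Ψ ⟨w (1 : Λ), rfl⟩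
  exact ⟨x, hx.trans (by simpa using congr($hwΨ (1 : Λ)))⟩

theorem IsTilting.ker_sumEval_mem_perpInfOf (hT : IsTilting Λ n T) (hY : ExtGe1Zero Λ T Y) :
    ModuleCat.of Λ (LinearMap.ker (sumEval T Y).hom) ∈ perpInfOf Λ T := by
  have hses := isSES_subtype_ker _ (hT.surjective_sumEval hY)
  obtain ⟨-, hTκ, -⟩ := hT
  intro m K hK
  cases m with
  | zero =>
    obtain ⟨e⟩ := hK
    refine ext1Zero_of_forall_lift hses (hTκ _ 0 K ⟨e⟩) fun ψ =>
      ⟨e.hom ≫ ModuleCat.ofHom (Finsupp.lsingle (e.inv ≫ ψ)), ?_⟩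
    ext k
    simp [sumEval]
  | succ m =>
    obtain ⟨L, hL, hKL⟩ := hK
    exact ext1Zero_kernel_of_isSES hses hKL (hY m L hL) (hTκ _ (m + 1) K ⟨L, hL, hKL⟩)

theorem IsTilting.finsupp_mem_perpInfOf_prod {S : ModuleCat.{u} Λ} (hT : IsTilting Λ n T)
    (hS : IsStronglyGorensteinProjective Λ S) (κ : Type u) :
    ModuleCat.of Λ (κ →₀ T) ∈ perpInfOf Λ (ModuleCat.of Λ (T × S)) :=
  let ⟨hpd, hTκ, _⟩ := hT
  ExtGe1Zero.prod (hTκ κ) (hS.extGe1Zero (hpd.finsupp κ))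

end Tilting

theorem IsSyzygyOf.mem_leftPerp_perpInfOf {K X U : ModuleCat.{u} Λ} (hK : IsSyzygyOf Λ K X)
    (hX : X ∈ leftPerp Λ (perpInfOf Λ U)) : K ∈ leftPerp Λ (perpInfOf Λ U) :=
  fun _ hB => hK.ext1Zero_iff.2 (hX _ (ExtGe1Zero.cosyzygy hB))

theorem IsTilting.mem_leftPerp_of_projDimLe {n j : ℕ} {T S X : ModuleCat.{u} Λ}
    (hT : IsTilting Λ n T) (hS : IsStronglyGorensteinProjective Λ S)
    (hX : X ∈ leftPerp Λ (perpInfOf Λ (ModuleCat.of Λ (T × S)))) (hpd : ProjDimLe Λ j X) :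
    X ∈ leftPerp Λ (perpInfOf Λ T) := by
  induction j generalizing X with
  | zero => exact fun _ _ => @Ext1Zero.of_projective _ _ _ _ hpd
  | succ j ih =>
    obtain ⟨K, G, i, p, hG, hses, hK⟩ := hpd
    have hKX : IsSyzygyOf Λ K X := ⟨G, i, p, hG, hses⟩
    intro Y hY
    exact ext1Zero_cokernel_of_isSES (isSES_subtype_ker _ (hT.surjective_sumEval hY)) hKX
      (hX _ (hT.finsupp_mem_perpInfOf_prod hS _))
      (ih (hKX.mem_leftPerp_perpInfOf hX) hK _ (hT.ker_sumEval_mem_perpInfOf hY))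

end GorensteinFDC

open GorensteinFDC in
/-- If `T` is `n`-tilting, `S` strongly Gorenstein projective,
`U = T ⊕ S`, and `(L_U, R_U)` is the cotorsion pair with `R_U = U^{⊥∞}`, then
`L_U ∩ P_n = ^⊥(T^{⊥∞})`. -/
theorem statement5 (Λ : Type u) [Ring Λ] (n : ℕ) (T S : ModuleCat.{u} Λ)
    (hT : IsTilting Λ n T) (hS : IsStronglyGorensteinProjective Λ S)
    (L R : Set (ModuleCat.{u} Λ)) (hcp : IsCotorsionPair Λ L R)
    (hR : R = perpInfOf Λ (ModuleCat.of Λ (↥T × ↥S))) :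
    L ∩ {M | ProjDimLe Λ n M} = leftPerp Λ (perpInfOf Λ T) := by
  obtain ⟨rfl, -⟩ := hcp
  subst hR
  ext X
  refine ⟨fun ⟨hXL, hXpd⟩ => hT.mem_leftPerp_of_projDimLe hS hXL hXpd, fun hX => ⟨?_, ?_⟩⟩
  · exact fun B hB => hX B hB.of_prod
  · exact hT.1.of_mem_leftPerp hX
end

section
/- Let Λ be a ring and let U and V be classes of Λ-modules, each closed under extensions and containing the zero module. If Ext¹_Λ(U,V) = 0 for all U ∈ U and V ∈ V, then U ⋆ V = filt(U ∪ V); that is, a module has a finite filtration with factors in U ∪ V if and only if it is an extension of a module in U by a module in V. -/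
open CategoryTheory Function

universe u

/-!
Given a filtration `0 = F₀ ⊆ ⋯ ⊆ F_k = M` with factors in `U ∪ V`, one shows by induction that
each `Fᵢ` has a submodule `T` in `U` with `Fᵢ / T` in `V`. Passing from `S = Fᵢ` to `M = Fᵢ₊₁`
with `M / S ≅ C`, the module `M / T` has the submodule `S / T ∈ V` with quotient `C`. If `C ∈ V`,
then `M / T ∈ V`. If `C ∈ U`, this sequence splits because `Ext¹(C, S / T) = 0`; the preimage in
`M` of a complement of `S / T` contains `T` with quotient `≅ C`, hence lies in `U`, and the
quotient of `M` by it is `≅ S / T`. Conversely `0 ⊆ T ⊆ M` is a filtration of an extension.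
-/

namespace GorensteinFDC

variable {Λ : Type u} [Ring Λ] {M N : Type u} [AddCommGroup M] [Module Λ M]
  [AddCommGroup N] [Module Λ N] {C U V : Set (ModuleCat.{u} Λ)}

def MemUpToIso (C : Set (ModuleCat.{u} Λ)) (M : Type u) [AddCommGroup M] [Module Λ M] : Prop :=
  ∃ X ∈ C, Nonempty (M ≃ₗ[Λ] X)

lemma MemUpToIso.of_linearEquiv (e : M ≃ₗ[Λ] N) (h : MemUpToIso C N) : MemUpToIso C M := by
  obtain ⟨X, hX, ⟨e'⟩⟩ := h
  exact ⟨X, hX, ⟨e.trans e'⟩⟩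

lemma memUpToIso_of_subsingleton (hC : ∃ Z ∈ C, Subsingleton Z) [Subsingleton M] :
    MemUpToIso C M := by
  obtain ⟨Z, hZ, _⟩ := hC
  exact ⟨Z, hZ, ⟨LinearEquiv.ofSubsingleton _ _⟩⟩

def IsExtension (U V : Set (ModuleCat.{u} Λ)) (M : Type u) [AddCommGroup M] [Module Λ M] :
    Prop :=
  ∃ T : Submodule Λ M, MemUpToIso U T ∧ MemUpToIso V (M ⧸ T)

lemma IsExtension.of_linearEquiv (e : M ≃ₗ[Λ] N) (h : IsExtension U V N) :
    IsExtension U V M := by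
  obtain ⟨T, hT, hQ⟩ := h
  refine ⟨T.map e.symm.toLinearMap, hT.of_linearEquiv (e.symm.submoduleMap T).symm,
    hQ.of_linearEquiv (Submodule.Quotient.equiv _ _ e ?_)⟩
  rw [← Submodule.map_comp, LinearEquiv.comp_coe, LinearEquiv.symm_trans_self,
    LinearEquiv.refl_toLinearMap, Submodule.map_id]

lemma isExtension_of_subsingleton (hU : ∃ Z ∈ U, Subsingleton Z) (hV : ∃ Z ∈ V, Subsingleton Z)
    [Subsingleton M] : IsExtension U V M :=
  ⟨⊥, memUpToIso_of_subsingleton hU, memUpToIso_of_subsingleton hV⟩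

lemma exists_isSES_ker_eq {X A B : ModuleCat.{u} Λ} (S : Submodule Λ X) (eA : S ≃ₗ[Λ] A)
    (eB : (X ⧸ S) ≃ₗ[Λ] B) :
    ∃ (i : A ⟶ X) (p : X ⟶ B), IsSES Λ i p ∧ LinearMap.ker p.hom = S := by
  have hker : LinearMap.ker (eB.toLinearMap ∘ₗ S.mkQ) = S := by
    rw [LinearMap.ker_comp, LinearEquiv.ker, Submodule.comap_bot, Submodule.ker_mkQ]
  refine ⟨ModuleCat.ofHom (S.subtype ∘ₗ eA.symm.toLinearMap),
    ModuleCat.ofHom (eB.toLinearMap ∘ₗ S.mkQ), ⟨?_, ?_, ?_⟩, hker⟩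
  · exact S.injective_subtype.comp eA.symm.injective
  · exact eB.surjective.comp S.mkQ_surjective
  · refine LinearMap.exact_iff.mpr ?_
    simp only [ModuleCat.hom_ofHom]
    rw [hker, LinearMap.range_comp,
      LinearEquiv.range, Submodule.map_top, Submodule.range_subtype]

lemma mem_starClass_iff_isExtension {X : ModuleCat.{u} Λ} :
    X ∈ starClass Λ U V ↔ IsExtension U V X := by
  constructor
  · rintro ⟨A, B, i, p, hA, hB, hi, hp, hexact⟩
    refine ⟨LinearMap.range i.hom, ⟨A, hA, ⟨(LinearEquiv.ofInjective i.hom hi).symm⟩⟩,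
      ⟨B, hB, ⟨?_⟩⟩⟩
    exact (Submodule.quotEquivOfEq _ _ (LinearMap.exact_iff.mp hexact).symm).trans
      (p.hom.quotKerEquivOfSurjective hp)
  · rintro ⟨T, ⟨A, hA, ⟨eA⟩⟩, ⟨B, hB, ⟨eB⟩⟩⟩
    obtain ⟨i, p, hses, -⟩ := exists_isSES_ker_eq T eA eB
    exact ⟨A, B, i, p, hA, hB, hses⟩

lemma ExtensionClosed.memUpToIso (hU : ExtensionClosed Λ U) (T : Submodule Λ M)
    (hT : MemUpToIso U T) (hQ : MemUpToIso U (M ⧸ T)) : MemUpToIso U M :=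
  ⟨ModuleCat.of Λ M, hU _ (mem_starClass_iff_isExtension.mpr ⟨T, hT, hQ⟩),
    ⟨LinearEquiv.refl Λ M⟩⟩

noncomputable def quotientComapSubtypeEquivMapMkQ (T S : Submodule Λ M) :
    (S ⧸ T.comap S.subtype) ≃ₗ[Λ] S.map T.mkQ :=
  (Submodule.quotEquivOfEq _ _ (by rw [LinearMap.ker_submoduleMap, Submodule.ker_mkQ])).trans
    ((T.mkQ.submoduleMap S).quotKerEquivOfSurjective (LinearMap.submoduleMap_surjective _ _))

lemma ExtensionClosed.memUpToIso_of_le (hU : ExtensionClosed Λ U) {T S : Submodule Λ M}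
    (hTS : T ≤ S) (hT : MemUpToIso U T) (hST : MemUpToIso U (S.map T.mkQ)) :
    MemUpToIso U S :=
  hU.memUpToIso (T.comap S.subtype) (hT.of_linearEquiv (Submodule.comapSubtypeEquivOfLe hTS))
    (hST.of_linearEquiv (quotientComapSubtypeEquivMapMkQ T S))

lemma IsExtension.exists_le_memUpToIso_map_mkQ {S : Submodule Λ M} (h : IsExtension U V S) :
    ∃ T ≤ S, MemUpToIso U T ∧ MemUpToIso V (S.map T.mkQ) := by
  obtain ⟨T, hT, hQ⟩ := h
  have hcomap : (T.map S.subtype).comap S.subtype = T :=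
    Submodule.comap_map_eq_of_injective S.injective_subtype T
  refine ⟨T.map S.subtype, Submodule.map_subtype_le S T,
    hT.of_linearEquiv (T.equivMapOfInjective _ S.injective_subtype).symm, ?_⟩
  exact hQ.of_linearEquiv ((quotientComapSubtypeEquivMapMkQ _ S).symm.trans
    (Submodule.quotEquivOfEq _ _ hcomap))

lemma Ext1Zero.exists_isCompl {B C : ModuleCat.{u} Λ} (h : Ext1Zero Λ C B)
    (S : Submodule Λ M) (eB : S ≃ₗ[Λ] B) (eC : (M ⧸ S) ≃ₗ[Λ] C) :
    ∃ W : Submodule Λ M, IsCompl W S := by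
  obtain ⟨i, p, hses, hker⟩ := exists_isSES_ker_eq (X := ModuleCat.of Λ M) S eB eC
  obtain ⟨s, hs⟩ := h _ i p hses
  have hps : p.hom ∘ₗ s.hom = LinearMap.id := congrArg ModuleCat.Hom.hom hs
  have hs_inj : LinearMap.ker s.hom = ⊥ :=
    LinearMap.ker_eq_bot_of_inverse hps
  -- `s ∘ p` is the projection onto the complement `range s` along `ker p = S`
  have hidem : IsIdempotentElem (s.hom ∘ₗ p.hom) := by
    change (s.hom ∘ₗ p.hom) ∘ₗ (s.hom ∘ₗ p.hom) = s.hom ∘ₗ p.hom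
    rw [LinearMap.comp_assoc, ← LinearMap.comp_assoc p.hom, hps, LinearMap.id_comp]
  refine ⟨LinearMap.range (s.hom ∘ₗ p.hom), ?_⟩
  simpa only [LinearMap.ker_comp_of_ker_eq_bot _ hs_inj, hker] using LinearMap.IsIdempotentElem.isCompl hidem

lemma IsExtension.of_quotient_right (hV : ExtensionClosed Λ V) {S : Submodule Λ M}
    (hS : IsExtension U V S) (hQ : MemUpToIso V (M ⧸ S)) : IsExtension U V M := by
  obtain ⟨T, hTS, hT, hST⟩ := hS.exists_le_memUpToIso_map_mkQ
  exact ⟨T, hT, hV.memUpToIso _ hST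
    (hQ.of_linearEquiv (Submodule.quotientQuotientEquivQuotient T S hTS))⟩

lemma IsExtension.of_quotient_left (hU : ExtensionClosed Λ U)
    (hperp : ∀ A ∈ U, ∀ B ∈ V, Ext1Zero Λ A B) {S : Submodule Λ M}
    (hS : IsExtension U V S) (hQ : MemUpToIso U (M ⧸ S)) : IsExtension U V M := by
  obtain ⟨T, hTS, hT, B, hB, ⟨eB⟩⟩ := hS.exists_le_memUpToIso_map_mkQ
  obtain ⟨C, hC, ⟨eC⟩⟩ := hQ
  have eQ : ((M ⧸ T) ⧸ S.map T.mkQ) ≃ₗ[Λ] C :=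
    (Submodule.quotientQuotientEquivQuotient T S hTS).trans eC
  obtain ⟨W, hW⟩ := (hperp C hC B hB).exists_isCompl (S.map T.mkQ) eB eQ
  have hmap : (W.comap T.mkQ).map T.mkQ = W :=
    Submodule.map_comap_eq_of_surjective T.mkQ_surjective W
  have hTW : T ≤ W.comap T.mkQ := T.le_comap_mkQ W
  refine ⟨W.comap T.mkQ, hU.memUpToIso_of_le hTW hT ⟨C, hC, ⟨?_⟩⟩, B, hB, ⟨?_⟩⟩
  · exact (LinearEquiv.ofEq _ _ hmap).trans
      ((Submodule.quotientEquivOfIsCompl _ _ hW.symm).symm.trans eQ)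
  · exact (Submodule.quotientQuotientEquivQuotient T _ hTW).symm.trans
      ((Submodule.quotEquivOfEq _ _ hmap).trans ((Submodule.quotientEquivOfIsCompl _ _ hW).trans eB))

lemma IsExtension.finitelyFiltered {X : ModuleCat.{u} Λ} (h : IsExtension U V X) :
    FinitelyFiltered Λ (U ∪ V) X := by
  obtain ⟨T, ⟨A, hA, ⟨eA⟩⟩, ⟨B, hB, ⟨eB⟩⟩⟩ := h
  refine ⟨2, fun n => match n with | 0 => ⊥ | 1 => T | _ => ⊤, rfl, rfl, ?_, ?_⟩
  · intro i hi
    interval_cases i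
    · exact bot_le
    · exact le_top
  · intro i hi
    interval_cases i
    · refine ⟨A, Or.inl hA, ⟨(Submodule.quotEquivOfEqBot _ ?_).trans eA⟩⟩
      show Submodule.comap T.subtype ⊥ = ⊥
      rw [Submodule.comap_bot, Submodule.ker_subtype]
    · refine ⟨B, Or.inr hB, ⟨(Submodule.Quotient.equiv _ _ Submodule.topEquiv ?_).trans eB⟩⟩
      ext x
      simp

lemma isExtension_of_finitelyFiltered (hU : ExtensionClosed Λ U) (hV : ExtensionClosed Λ V)
    (hU0 : ∃ Z ∈ U, Subsingleton Z) (hV0 : ∃ Z ∈ V, Subsingleton Z)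
    (hperp : ∀ A ∈ U, ∀ B ∈ V, Ext1Zero Λ A B) {X : ModuleCat.{u} Λ}
    (h : FinitelyFiltered Λ (U ∪ V) X) : IsExtension U V X := by
  obtain ⟨k, F, h0, hk, hmono, hfac⟩ := h
  have hF : ∀ i ≤ k, IsExtension U V (F i) := by
    intro i
    induction i with
    | zero =>
      intro _
      rw [h0]
      exact isExtension_of_subsingleton hU0 hV0
    | succ n ih =>
      intro hn
      have hS := (ih (by omega)).of_linearEquiv (Submodule.comapSubtypeEquivOfLe (hmono n hn))
      obtain ⟨C, hC | hC, hQ⟩ := hfac n hn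
      · exact hS.of_quotient_left hU hperp ⟨C, hC, hQ⟩
      · exact hS.of_quotient_right hV ⟨C, hC, hQ⟩
  have hX := hF k le_rfl
  rw [hk] at hX
  exact hX.of_linearEquiv Submodule.topEquiv.symm

end GorensteinFDC

open GorensteinFDC in
/-- If `U`, `V` are extension closed classes containing the zero module
and `Ext¹_Λ(U, V) = 0` for all `U ∈ U`, `V ∈ V`, then `U ⋆ V = filt(U ∪ V)`. -/
theorem statement10 (Λ : Type u) [Ring Λ] (U V : Set (ModuleCat.{u} Λ))
    (hUext : ExtensionClosed Λ U) (hVext : ExtensionClosed Λ V)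
    (hU0 : ∃ Z ∈ U, Subsingleton ↥Z) (hV0 : ∃ Z ∈ V, Subsingleton ↥Z)
    (hperp : ∀ A ∈ U, ∀ B ∈ V, Ext1Zero Λ A B) :
    starClass Λ U V = {M | FinitelyFiltered Λ (U ∪ V) M} := by
  ext X
  rw [mem_starClass_iff_isExtension]
  exact ⟨IsExtension.finitelyFiltered,
    isExtension_of_finitelyFiltered hUext hVext hU0 hV0 hperp⟩
end
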